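/- For every Morse set K on a compact set M ⊆ ℝ̄, the cardinalities of the two parts satisfy |κ⁺ − κ⁻| ≤ 1, where κ⁺ = |K⁺| and κ⁻ = |K⁻|. -/
import Mathlib


noncomputable section

/-- The co-lexicographic strict order on `EReal × EReal`:
`(x,y) < (x',y')` iff `y < y'`, or `y = y'` and `x < x'`. -/
def colexLt (a b : EReal × EReal) : Prop :=
  a.2 < b.2 ∨ (a.2 = b.2 ∧ a.1 < b.1)

/-- `z` lies strictly between `x` and `x'`. -/
def strictlyBetween (z x x' : EReal) : Prop :=
  min x x' < z ∧ z < max x x'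

/-- A Morse set on `M ⊆ ℝ̄ = EReal`: a finite set of points of `𝓜 = M × ℝ̄`, with no two
elements sharing a first coordinate, partitioned into maxima `K⁺` (enumerated `kp`, strictly
decreasing in the co-lexicographic order) and minima `K⁻` (enumerated `km`, strictly increasing),
satisfying the alternation and critical-boundary conditions. -/
structure MorseSet (M : Set EReal) where
  /-- `κ⁺`, the number of maxima -/
  np : ℕ
  /-- `κ⁻`, the number of minima -/
  nm : ℕ
  /-- the enumeration `k₁⁺ > k₂⁺ > …` of `K⁺` (0-indexed) -/
  kp : Fin np → EReal × EReal
  /-- the enumeration `k₁⁻ < k₂⁻ < …` of `K⁻` (0-indexed) -/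
  km : Fin nm → EReal × EReal
  kp_mem : ∀ i, (kp i).1 ∈ M
  km_mem : ∀ j, (km j).1 ∈ M
  /-- Injectivity: no two elements of `K` have the same first coordinate. -/
  fst_inj : ∀ a ∈ Set.range kp ∪ Set.range km, ∀ b ∈ Set.range kp ∪ Set.range km,
      a.1 = b.1 → a = b
  /-- Disjunction: `K = K⁺ ⊔ K⁻` is a disjoint union. -/
  disj : ∀ i j, kp i ≠ km j
  /-- Ordered: the maxima are enumerated in strictly decreasing co-lexicographic order. -/
  kp_anti : ∀ i j : Fin np, i < j → colexLt (kp j) (kp i)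
  /-- Ordered: the minima are enumerated in strictly increasing co-lexicographic order. -/
  km_mono : ∀ i j : Fin nm, i < j → colexLt (km i) (km j)
  /-- Alternation for maxima: two maxima with no maximum strictly between them (in the first
  coordinate) have exactly one minimum below both of them strictly between them. -/
  alt_max : ∀ i i' : Fin np, i ≠ i' →
      (¬ ∃ i'', strictlyBetween (kp i'').1 (kp i).1 (kp i').1) →
      ∃! j : Fin nm, colexLt (km j) (kp i) ∧ colexLt (km j) (kp i') ∧
        strictlyBetween (km j).1 (kp i).1 (kp i').1
  /-- Alternation for minima: two minima with no minimum strictly between them have exactly one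
  maximum above both of them strictly between them. -/
  alt_min : ∀ j j' : Fin nm, j ≠ j' →
      (¬ ∃ j'', strictlyBetween (km j'').1 (km j).1 (km j').1) →
      ∃! i : Fin np, colexLt (km j) (kp i) ∧ colexLt (km j') (kp i) ∧
        strictlyBetween (kp i).1 (km j).1 (km j').1
  /-- Critical boundary: every boundary point of `M` is the first coordinate of some element. -/
  boundary : ∀ x ∈ frontier M, (∃ i, (kp i).1 = x) ∨ (∃ j, (km j).1 = x)

section
lemma aux_count (n m : ℕ) (f : Fin n → EReal × EReal) (g : Fin m → EReal × EReal)
    (hf : Function.Injective (fun i => (f i).1))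
    (h : ∀ i i' : Fin n, i ≠ i' →
        (¬ ∃ i'', strictlyBetween (f i'').1 (f i).1 (f i').1) →
        ∃ j : Fin m, strictlyBetween (g j).1 (f i).1 (f i').1) :
    n ≤ m + 1 := by
  rcases Nat.lt_or_ge n 2 with hn | hn
  · omega
  set s : Finset EReal := Finset.univ.image (fun i => (f i).1) with hs
  have hcard : s.card = n := by
    rw [hs, Finset.card_image_of_injective _ hf, Finset.card_univ, Fintype.card_fin]
  let e := s.orderIsoOfFin hcard
  -- for each t : Fin (n-1), pick indices i,i' with consecutive first coords
  have key : ∀ t : Fin (n - 1), ∃ j : Fin m,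
      (e ⟨t.1, by omega⟩ : EReal) < (g j).1 ∧ (g j).1 < (e ⟨t.1 + 1, by omega⟩ : EReal) := by
    intro t
    set a : Fin n := ⟨t.1, by omega⟩
    set b : Fin n := ⟨t.1 + 1, by omega⟩
    have hab : (e a : EReal) < e b := by
      have : a < b := by simp [a, b, Fin.lt_def]
      exact_mod_cast e.strictMono this
    obtain ⟨i, -, hi⟩ := Finset.mem_image.mp (e a).2
    obtain ⟨i', -, hi'⟩ := Finset.mem_image.mp (e b).2
    have hne : i ≠ i' := by
      rintro rfl; rw [hi] at hi'; exact absurd hi' (ne_of_lt hab)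
    have hmin : min (f i).1 (f i').1 = (e a : EReal) := by
      rw [hi, hi']; exact min_eq_left hab.le
    have hmax : max (f i).1 (f i').1 = (e b : EReal) := by
      rw [hi, hi']; exact max_eq_right hab.le
    have hno : ¬ ∃ i'', strictlyBetween (f i'').1 (f i).1 (f i').1 := by
      rintro ⟨i'', h1, h2⟩
      rw [hmin] at h1; rw [hmax] at h2
      have hmem : (f i'').1 ∈ s := Finset.mem_image.mpr ⟨i'', Finset.mem_univ _, rfl⟩
      set u : Fin n := e.symm ⟨(f i'').1, hmem⟩
      have hu1 : a < u := by
        have := e.symm.strictMono (show (e a) < ⟨(f i'').1, hmem⟩ from h1)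
        simpa using this
      have hu2 : u < b := by
        have := e.symm.strictMono (show (⟨(f i'').1, hmem⟩ : s) < e b from h2)
        simpa using this
      rw [Fin.lt_def] at hu1 hu2
      simp only [a, b] at hu1 hu2
      omega
    obtain ⟨j, hj1, hj2⟩ := h i i' hne hno
    rw [hmin] at hj1; rw [hmax] at hj2
    exact ⟨j, hj1, hj2⟩
  choose j hj1 hj2 using key
  have hstep : ∀ t t' : Fin (n - 1), t < t' → (g (j t)).1 < (g (j t')).1 := by
    intro t t' hlt
    have h1 := hj2 t
    have h2 := hj1 t'
    have hle : (e ⟨t.1 + 1, by omega⟩ : EReal) ≤ (e ⟨t'.1, by omega⟩ : EReal) := by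
      exact_mod_cast e.monotone (by rw [Fin.le_def]; simp; rw [Fin.lt_def] at hlt; omega)
    exact (h1.trans_le hle).trans h2
  have hinj : Function.Injective j := by
    intro t t' htt
    by_contra hne
    rcases Ne.lt_or_gt hne with hlt | hlt
    · exact absurd (htt ▸ hstep t t' hlt) (lt_irrefl _)
    · exact absurd (htt ▸ hstep t' t hlt) (lt_irrefl _)
  have := Fintype.card_le_of_injective j hinj
  simp at this; omega

lemma colexLt_irrefl (a : EReal × EReal) : ¬ colexLt a a := by
  simp [colexLt]

end

/-- For every Morse set `K` on a compact set `M ⊆ ℝ̄`, the cardinalities of the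
two parts satisfy `|κ⁺ − κ⁻| ≤ 1`. -/
theorem morseSet_card_balance (M : Set EReal) (hM : IsCompact M) (K : MorseSet M) :
    |(K.np : ℤ) - (K.nm : ℤ)| ≤ 1 := by
  have hfp : Function.Injective (fun i => (K.kp i).1) := by
    intro i i' h
    have heq : K.kp i = K.kp i' :=
      K.fst_inj _ (Or.inl ⟨i, rfl⟩) _ (Or.inl ⟨i', rfl⟩) h
    by_contra hne
    rcases Ne.lt_or_gt hne with hlt | hlt
    · exact colexLt_irrefl _ (heq ▸ K.kp_anti i i' hlt)
    · exact colexLt_irrefl _ (heq ▸ K.kp_anti i' i hlt)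
  have hfm : Function.Injective (fun j => (K.km j).1) := by
    intro i i' h
    have heq : K.km i = K.km i' :=
      K.fst_inj _ (Or.inr ⟨i, rfl⟩) _ (Or.inr ⟨i', rfl⟩) h
    by_contra hne
    rcases Ne.lt_or_gt hne with hlt | hlt
    · exact colexLt_irrefl _ (heq ▸ K.km_mono i i' hlt)
    · exact colexLt_irrefl _ (heq ▸ K.km_mono i' i hlt)
  have hA : K.np ≤ K.nm + 1 :=
    aux_count K.np K.nm K.kp K.km hfp fun i i' hne hno =>
      (K.alt_max i i' hne hno).exists.imp fun j hj => hj.2.2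
  have hB : K.nm ≤ K.np + 1 :=
    aux_count K.nm K.np K.km K.kp hfm fun j j' hne hno =>
      (K.alt_min j j' hne hno).exists.imp fun i hi => hi.2.2
  rw [abs_le]
  omega

end
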